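/- arXiv:2303.14198 — 8 statements merged into one kernel-verified Lean document; each statement's English description precedes it below -/
import Mathlib

section
/- In any G²±-model on a mono-relational frame (R⁺ = R⁻ = R), for every formula φ and state w: v₁(◆¬φ, w) = v₂(◆φ, w) and v₂(◆¬φ, w) = v₁(◆φ, w); hence ◆¬φ ↔ ¬◆φ is strongly valid on mono-relational frames. -/
open unitInterval

instance : Fact ((0:ℝ) ≤ 1) := ⟨zero_le_one⟩

/-- Gödel implication on [0,1]. -/
noncomputable def gimp (a b : I) : I := if a ≤ b then 1 else b

/-- Gödel coimplication on [0,1]. -/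
noncomputable def gcoimp (a b : I) : I := if a ≤ b then 0 else a

/-- The language of G²± with ¬, ∧, →, ■, ◆. -/
inductive Fm : Type
  | var : ℕ → Fm
  | neg : Fm → Fm
  | and : Fm → Fm → Fm
  | imp : Fm → Fm → Fm
  | box : Fm → Fm
  | dia : Fm → Fm

/-- A bi-relational G²± model. -/
structure Mdl where
  W : Type
  Rp : W → W → I
  Rm : W → W → I
  v1 : ℕ → W → I
  v2 : ℕ → W → I

/-- The pair (positive support, negative support) of a formula at a state. -/
noncomputable def Mdl.val (M : Mdl) : Fm → M.W → I × I
  | .var n, w => (M.v1 n w, M.v2 n w)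
  | .neg φ, w => ((M.val φ w).2, (M.val φ w).1)
  | .and φ ψ, w => ((M.val φ w).1 ⊓ (M.val ψ w).1, (M.val φ w).2 ⊔ (M.val ψ w).2)
  | .imp φ ψ, w => (gimp (M.val φ w).1 (M.val ψ w).1, gcoimp (M.val ψ w).2 (M.val φ w).2)
  | .box φ, w => (⨅ w', gimp (M.Rp w w') (M.val φ w').1, ⨅ w', gimp (M.Rm w w') (M.val φ w').2)
  | .dia φ, w => (⨆ w', (M.Rp w w') ⊓ (M.val φ w').1, ⨆ w', (M.Rm w w') ⊓ (M.val φ w').2)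

noncomputable def Mdl.val1 (M : Mdl) (φ : Fm) (w : M.W) : I := (M.val φ w).1
noncomputable def Mdl.val2 (M : Mdl) (φ : Fm) (w : M.W) : I := (M.val φ w).2

/-- Biconditional: φ ↔ ψ := (φ → ψ) ∧ (ψ → φ). -/
def Fm.iff (φ ψ : Fm) : Fm := .and (.imp φ ψ) (.imp ψ φ)

theorem mono_relational_dia_neg :
    ∀ M : Mdl, M.Rp = M.Rm →
      ∀ (φ : Fm) (w : M.W),
        M.val1 (.dia (.neg φ)) w = M.val2 (.dia φ) w ∧
        M.val2 (.dia (.neg φ)) w = M.val1 (.dia φ) w ∧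
        M.val1 (Fm.iff (.dia (.neg φ)) (.neg (.dia φ))) w = 1 ∧
        M.val2 (Fm.iff (.dia (.neg φ)) (.neg (.dia φ))) w = 0 := by
  intro M h φ w
  have h1 : M.val1 (.dia (.neg φ)) w = M.val2 (.dia φ) w := by
    simp [Mdl.val1, Mdl.val2, Mdl.val, h]
  have h2 : M.val2 (.dia (.neg φ)) w = M.val1 (.dia φ) w := by
    simp [Mdl.val1, Mdl.val2, Mdl.val, h]
  refine ⟨h1, h2, ?_, ?_⟩
  · show (gimp (M.val1 (.dia (.neg φ)) w) (M.val2 (.dia φ) w)) ⊓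
      (gimp (M.val2 (.dia φ) w) (M.val1 (.dia (.neg φ)) w)) = 1
    rw [h1]; simp [gimp]
  · show (gcoimp (M.val1 (.dia φ) w) (M.val2 (.dia (.neg φ)) w)) ⊔
      (gcoimp (M.val2 (.dia (.neg φ)) w) (M.val1 (.dia φ) w)) = 0
    rw [h2]; simp [gcoimp]
end

section
/- If a bi-relational frame ⟨W, R⁺, R⁻⟩ has states w, w' with R⁺(w,w') ≠ R⁻(w,w'), then the formula ■¬p ↔ ¬■p is not strongly valid on the frame: there exists a valuation pair (v₁,v₂) and a state at which v₁(■¬p) ≠ v₁(¬■p) or v₂(■¬p) ≠ v₂(¬■p). -/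
open unitInterval

theorem box_neg_fails_on_non_mono_relational_frames :
    ∀ (W : Type) (Rp Rm : W → W → I) (w w' : W), Rp w w' ≠ Rm w w' →
      ∃ (v1 v2 : ℕ → W → I) (u : W),
        (Mdl.mk W Rp Rm v1 v2).val1 (.box (.neg (.var 0))) u ≠
          (Mdl.mk W Rp Rm v1 v2).val1 (.neg (.box (.var 0))) u ∨
        (Mdl.mk W Rp Rm v1 v2).val2 (.box (.neg (.var 0))) u ≠
          (Mdl.mk W Rp Rm v1 v2).val2 (.neg (.box (.var 0))) u := by
  
  intro W Rp Rm w w' hne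
  have : Nonempty W := ⟨w⟩
  have gself : ∀ a : I, gimp a a = 1 := fun a => if_pos le_rfl
  rcases lt_or_gt_of_ne hne with h | h
  · -- Rp w w' < Rm w w' : use second component
    refine ⟨fun _ u => Rp w u, fun _ u => Rm w u, w, Or.inr ?_⟩
    simp only [Mdl.val2, Mdl.val]
    have h1 : (⨅ x, gimp (Rp w x) (Rp w x)) = 1 := by
      simp only [gself]; exact iInf_const
    have h2 : (⨅ x, gimp (Rm w x) (Rp w x)) < 1 := by
      refine lt_of_le_of_lt (iInf_le _ w') ?_
      rw [gimp, if_neg (not_le.mpr h)]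
      exact lt_of_lt_of_le h le_one'
    rw [h1]
    exact ne_of_lt h2
  · -- Rp w w' > Rm w w' : use first component
    refine ⟨fun _ u => Rp w u, fun _ u => Rm w u, w, Or.inl ?_⟩
    simp only [Mdl.val1, Mdl.val]
    have h1 : (⨅ x, gimp (Rm w x) (Rm w x)) = 1 := by
      simp only [gself]; exact iInf_const
    have h2 : (⨅ x, gimp (Rp w x) (Rm w x)) < 1 := by
      refine lt_of_le_of_lt (iInf_le _ w') ?_
      rw [gimp, if_neg (not_le.mpr h)]
      exact lt_of_lt_of_le h le_one'
    rw [h1]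
    exact ne_of_lt h2
end

section
/- The formula ■(p∧q) ↔ (■p ∧ ■q) is not strongly valid in G²±: there is a bi-relational model and a state where its v₁-value differs from 1 or its v₂-value differs from 0. -/
open unitInterval

lemma gimp_one (x : I) : gimp 1 x = x := by
  unfold gimp
  split
  · exact (le_antisymm (by assumption) le_top).symm ▸ rfl
  · rfl

lemma not_one_le_zero : ¬ ((1:I) ≤ 0) := by norm_num [← Subtype.coe_le_coe]

/-- Countermodel: two worlds, R⁻ ≡ 1, with v₂(p) and v₂(q) complementary indicators. -/
noncomputable def M0 : Mdl :=
  { W := Bool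
    Rp := fun _ _ => 1
    Rm := fun _ _ => 1
    v1 := fun _ _ => 1
    v2 := fun n w => if n = 0 then (if w then 1 else 0) else (if w then 0 else 1) }

theorem box_not_multiplicative :
    ∃ (M : Mdl) (w : M.W),
      M.val1 (Fm.iff (.box (.and (.var 0) (.var 1))) (.and (.box (.var 0)) (.box (.var 1)))) w ≠ 1 ∨
      M.val2 (Fm.iff (.box (.and (.var 0) (.var 1))) (.and (.box (.var 0)) (.box (.var 1)))) w ≠ 0 := by
  refine ⟨M0, true, Or.inr ?_⟩
  have h : ∀ (f : Bool → I), (⨅ w', gimp ((1:I)) (f w')) = f true ⊓ f false := by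
    intro f
    simp only [gimp_one, iInf_bool_eq]
  simp only [Mdl.val2, Fm.iff, Mdl.val, M0]
  rw [h, h, h]
  norm_num [gcoimp, not_one_le_zero]
end

section
/- The formula ■(p ∧ ¬p) → ■q is not v₁-valid in G²±: there exists a bi-relational model and state w with v₁(■(p∧¬p) → ■q, w) < 1. -/
open unitInterval

theorem box_explosion_not_valid :
    ∃ (M : Mdl) (w : M.W),
      M.val1 (.imp (.box (.and (.var 0) (.neg (.var 0)))) (.box (.var 1))) w < 1 := by
  refine ⟨⟨Unit, fun _ _ => 1, fun _ _ => 1,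
    fun n _ => if n = 0 then 1 else 0, fun _ _ => 1⟩, (), ?_⟩
  simp only [Mdl.val1, Mdl.val, gimp, gcoimp, ciInf_unique]
  norm_num
end

section
/- The formula ◆(p ∧ ¬p) → ◆q is not v₁-valid in G²±: there exists a bi-relational model and state w with v₁(◆(p∧¬p) → ◆q, w) < 1. -/
open unitInterval

/-! Valuations of G²± are paraconsistent: a variable may be fully supported both positively and
negatively. At a reflexive state where `p` is such a glut and `q` is false, `◆(p ∧ ¬p)` takes
value `1` while `◆q` takes value `0`, and the Gödel implication `1 → 0` is `0`. -/

theorem gimp_lt_one_iff {a b : I} : gimp a b < 1 ↔ b < a := by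
  unfold gimp
  split_ifs with hab
  · simpa using hab
  · have hba : b < a := lt_of_not_ge hab
    exact iff_of_true (hba.trans_le le_one') hba

namespace Mdl

variable (M : Mdl)

theorem val1_var (n : ℕ) (w : M.W) : M.val1 (.var n) w = M.v1 n w := rfl

theorem val2_var (n : ℕ) (w : M.W) : M.val2 (.var n) w = M.v2 n w := rfl

theorem val1_neg (φ : Fm) (w : M.W) : M.val1 (.neg φ) w = M.val2 φ w := rfl

theorem val1_and (φ ψ : Fm) (w : M.W) : M.val1 (.and φ ψ) w = M.val1 φ w ⊓ M.val1 ψ w := rfl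

theorem val1_imp (φ ψ : Fm) (w : M.W) :
    M.val1 (.imp φ ψ) w = gimp (M.val1 φ w) (M.val1 ψ w) := rfl

theorem val1_dia_of_subsingleton [Subsingleton M.W] (φ : Fm) (w : M.W) :
    M.val1 (.dia φ) w = M.Rp w w ⊓ M.val1 φ w :=
  le_antisymm (iSup_le fun w' => by rw [Subsingleton.elim w' w]; rfl)
    (le_iSup (fun w' => M.Rp w w' ⊓ M.val1 φ w') w)

end Mdl

noncomputable abbrev gluttonModel : Mdl where
  W := Unit
  Rp _ _ := 1
  Rm _ _ := 1
  v1 n _ := if n = 0 then 1 else 0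
  v2 _ _ := 1

theorem dia_explosion_not_valid :
    ∃ (M : Mdl) (w : M.W),
      M.val1 (.imp (.dia (.and (.var 0) (.neg (.var 0)))) (.dia (.var 1))) w < 1 := by
  refine ⟨gluttonModel, (), ?_⟩
  have hglut : gluttonModel.val1 (.dia (.and (.var 0) (.neg (.var 0)))) () = 1 := by
    rw [Mdl.val1_dia_of_subsingleton, Mdl.val1_and, Mdl.val1_neg, Mdl.val1_var, Mdl.val2_var]
    simp
  have hfalse : gluttonModel.val1 (.dia (.var 1)) () = 0 := by
    rw [Mdl.val1_dia_of_subsingleton, Mdl.val1_var]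
    simp
  rw [Mdl.val1_imp, gimp_lt_one_iff, hglut, hfalse]
  exact zero_lt_one
end

section
/- No formula in the ◆-free fragment has the same value as ◆p at w₀ in the model of Theorem 3, and no formula in the ■-free fragment has the same value as ■p at w₀; hence ■ and ◆ are not interdefinable in G²±. -/
open unitInterval

/-- The crisp relation of the model of Theorem 3: w₀ sees w₁ and w₂. -/
noncomputable def thmR : Fin 3 → Fin 3 → I :=
  fun w w' => if w = 0 ∧ (w' = 1 ∨ w' = 2) then 1 else 0

/-- The model of Theorem 3: all variables valued (1,0) at w₀, (2/3,1/2) at w₁,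
(1/3,1/4) at w₂; both relations equal to `thmR`. -/
noncomputable abbrev thmModel : Mdl where
  W := Fin 3
  Rp := thmR
  Rm := thmR
  v1 := fun _ w =>
    if w = 1 then ⟨2/3, by norm_num [Set.mem_Icc]⟩
    else if w = 2 then ⟨1/3, by norm_num [Set.mem_Icc]⟩ else 1
  v2 := fun _ w =>
    if w = 1 then ⟨1/2, by norm_num [Set.mem_Icc]⟩
    else if w = 2 then ⟨1/4, by norm_num [Set.mem_Icc]⟩ else 0

/-- ◆-freeness of a formula. -/
def Fm.diaFree : Fm → Prop
  | .var _ => True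
  | .neg φ => φ.diaFree
  | .and φ ψ => φ.diaFree ∧ ψ.diaFree
  | .imp φ ψ => φ.diaFree ∧ ψ.diaFree
  | .box φ => φ.diaFree
  | .dia _ => False

/-- ■-freeness of a formula. -/
def Fm.boxFree : Fm → Prop
  | .var _ => True
  | .neg φ => φ.boxFree
  | .and φ ψ => φ.boxFree ∧ ψ.boxFree
  | .imp φ ψ => φ.boxFree ∧ ψ.boxFree
  | .box _ => False
  | .dia φ => φ.boxFree


/-! The worlds `w₁` and `w₂` have no successors, so there every boxed formula is worth `(1, 1)` and
every diamond formula `(0, 0)`. The order embedding `x ↦ max (x/2) (2x - 1)` of `[0, 1]` fixes `0`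
and `1`, hence commutes with all Gödel connectives, and maps the valuation at `w₁` to that at `w₂`;
by induction it maps the value of every formula at `w₁` to its value at `w₂`. Values at `w₁` lie in
`Y = {0, 1/2, 2/3, 1}`, so at `w₀` the formula `■φ` takes a value in `X = {0, 1/4, 1/3, 1}`, the
image of `Y`, and `◆φ` a value in `Y`. Each Gödel connective returns one of its arguments, `0` or
`1`, so `X` bounds the values of ◆-free formulas at `w₀`, and `Y` those of ■-free ones; but the
first component of `◆p` at `w₀` is `2/3 ∉ X`, and that of `■p` is `1/3 ∉ Y`. -/

section GodelConnectives

variable {S : Set I} {a b : I}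

theorem gimp_mem (h1 : 1 ∈ S) (hb : b ∈ S) : gimp a b ∈ S := by
  unfold gimp; split_ifs; exacts [h1, hb]

theorem gcoimp_mem (h0 : 0 ∈ S) (ha : a ∈ S) : gcoimp a b ∈ S := by
  unfold gcoimp; split_ifs; exacts [h0, ha]

theorem gimp_zero_left (a : I) : gimp 0 a = 1 := if_pos nonneg'

theorem gimp_one_left (a : I) : gimp 1 a = a := by
  unfold gimp; split_ifs with h
  exacts [le_antisymm h le_one', rfl]

theorem gimp_map {e : I ↪o I} (h1 : e 1 = 1) (a b : I) : gimp (e a) (e b) = e (gimp a b) := by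
  unfold gimp; split_ifs <;> simp_all

theorem gcoimp_map {e : I ↪o I} (h0 : e 0 = 0) (a b : I) :
    gcoimp (e a) (e b) = e (gcoimp a b) := by
  unfold gcoimp; split_ifs <;> simp_all

end GodelConnectives

namespace Mdl

variable (M : Mdl) {w : M.W} {S : Set I} {φ ψ : Fm}

theorem val_neg_mem (h : M.val φ w ∈ S ×ˢ S) : M.val (.neg φ) w ∈ S ×ˢ S := ⟨h.2, h.1⟩

theorem val_and_mem (hφ : M.val φ w ∈ S ×ˢ S) (hψ : M.val ψ w ∈ S ×ˢ S) :
    M.val (.and φ ψ) w ∈ S ×ˢ S :=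
  ⟨inf_ind _ _ hφ.1 hψ.1, sup_ind _ _ hφ.2 hψ.2⟩

theorem val_imp_mem (h0 : 0 ∈ S) (h1 : 1 ∈ S) (hψ : M.val ψ w ∈ S ×ˢ S) :
    M.val (.imp φ ψ) w ∈ S ×ˢ S :=
  ⟨gimp_mem h1 hψ.1, gcoimp_mem h0 hψ.2⟩

theorem val_box_of_rel_eq_zero (hp : ∀ w', M.Rp w w' = 0) (hm : ∀ w', M.Rm w w' = 0)
    (φ : Fm) : M.val (.box φ) w = (1, 1) := by
  simp only [Mdl.val, hp, hm, gimp_zero_left]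
  exact Prod.ext iInf_top iInf_top

theorem val_dia_of_rel_eq_zero (hp : ∀ w', M.Rp w w' = 0) (hm : ∀ w', M.Rm w w' = 0)
    (φ : Fm) : M.val (.dia φ) w = (0, 0) := by
  simp only [Mdl.val, hp, hm, nonneg', min_eq_left]
  exact Prod.ext iSup_bot iSup_bot

end Mdl

theorem iInf_fin_three {α : Type*} [CompleteLattice α] (f : Fin 3 → α) :
    ⨅ i, f i = f 0 ⊓ f 1 ⊓ f 2 :=
  iSup_fin_three (α := αᵒᵈ)

noncomputable def half : I := ⟨1 / 2, by norm_num [Set.mem_Icc]⟩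

noncomputable def twoThirds : I := ⟨2 / 3, by norm_num [Set.mem_Icc]⟩

/-- The components of the pairs in `Y`; `shrink '' thmDegrees` are those of `X`. -/
def thmDegrees : Set I := {0, half, twoThirds, 1}

theorem zero_mem_thmDegrees : 0 ∈ thmDegrees := by simp [thmDegrees]

theorem one_mem_thmDegrees : 1 ∈ thmDegrees := by simp [thmDegrees]

/-- Piecewise linear through `(1/2, 1/4)` and `(2/3, 1/3)`: it carries the valuation at `w₁` to
the one at `w₂`. -/
noncomputable def shrink : I ↪o I :=
  OrderEmbedding.ofStrictMono
    (fun x => ⟨max ((x : ℝ) / 2) (2 * x - 1),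
      le_max_of_le_left (by linarith [x.2.1]), max_le (by linarith [x.2.2]) (by linarith [x.2.2])⟩)
    fun x y h => by
      have h' : (x : ℝ) < y := h
      show max ((x : ℝ) / 2) _ < max ((y : ℝ) / 2) _
      exact max_lt_max (by linarith) (by linarith)

theorem coe_shrink (x : I) : (shrink x : ℝ) = max ((x : ℝ) / 2) (2 * x - 1) := rfl

theorem shrink_zero : shrink 0 = 0 := by ext; simp [coe_shrink]

theorem shrink_one : shrink 1 = 1 := by ext; norm_num [coe_shrink]

theorem shrink_le (x : I) : shrink x ≤ x := by
  change (shrink x : ℝ) ≤ x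
  rw [coe_shrink]
  exact max_le (by linarith [x.2.1]) (by linarith [x.2.2])

theorem twoThirds_notMem_image_shrink : twoThirds ∉ shrink '' thmDegrees := by
  rintro ⟨y, hy | hy | hy | hy, hyt⟩ <;> subst hy <;>
    norm_num [Subtype.ext_iff, coe_shrink, half, twoThirds] at hyt

theorem shrink_twoThirds_notMem : shrink twoThirds ∉ thmDegrees := by
  rintro (h | h | h | h) <;> norm_num [Subtype.ext_iff, coe_shrink, half, twoThirds] at h

theorem thmR_succ_eq_zero (i : Fin 2) (w : Fin 3) : thmR i.succ w = 0 := by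
  simp [thmR, Fin.succ_ne_zero]

theorem thmModel_val_var_one (n : ℕ) : thmModel.val (.var n) 1 = (twoThirds, half) := rfl

theorem thmModel_val_var_two (n : ℕ) :
    thmModel.val (.var n) 2 = (shrink twoThirds, shrink half) := by
  refine Prod.ext ?_ ?_ <;> ext <;> norm_num [Mdl.val, coe_shrink, twoThirds, half, Fin.ext_iff]

theorem thmModel_val_two (φ : Fm) :
    thmModel.val φ 2 = Prod.map shrink shrink (thmModel.val φ 1) := by
  induction φ with
  | var n => rw [thmModel_val_var_two, thmModel_val_var_one]; rfl
  | neg φ ih => simp [Mdl.val, ih]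
  | and φ ψ ihφ ihψ =>
    simp [Mdl.val, ihφ, ihψ, shrink.monotone.map_min, shrink.monotone.map_max]
  | imp φ ψ ihφ ihψ =>
    simp [Mdl.val, ihφ, ihψ, gimp_map shrink_one, gcoimp_map shrink_zero]
  | box φ =>
    rw [Mdl.val_box_of_rel_eq_zero _ (thmR_succ_eq_zero 0) (thmR_succ_eq_zero 0),
      Mdl.val_box_of_rel_eq_zero _ (thmR_succ_eq_zero 1) (thmR_succ_eq_zero 1)]
    simp [shrink_one]
  | dia φ =>
    rw [Mdl.val_dia_of_rel_eq_zero _ (thmR_succ_eq_zero 0) (thmR_succ_eq_zero 0),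
      Mdl.val_dia_of_rel_eq_zero _ (thmR_succ_eq_zero 1) (thmR_succ_eq_zero 1)]
    simp [shrink_zero]

theorem thmModel_val_one_mem (φ : Fm) : thmModel.val φ 1 ∈ thmDegrees ×ˢ thmDegrees := by
  induction φ with
  | var n => rw [thmModel_val_var_one]; simp [thmDegrees]
  | neg φ ih => exact Mdl.val_neg_mem _ ih
  | and φ ψ ihφ ihψ => exact Mdl.val_and_mem _ ihφ ihψ
  | imp φ ψ _ ihψ => exact Mdl.val_imp_mem _ zero_mem_thmDegrees one_mem_thmDegrees ihψ
  | box φ =>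
    rw [Mdl.val_box_of_rel_eq_zero _ (thmR_succ_eq_zero 0) (thmR_succ_eq_zero 0)]
    exact ⟨one_mem_thmDegrees, one_mem_thmDegrees⟩
  | dia φ =>
    rw [Mdl.val_dia_of_rel_eq_zero _ (thmR_succ_eq_zero 0) (thmR_succ_eq_zero 0)]
    exact ⟨zero_mem_thmDegrees, zero_mem_thmDegrees⟩

theorem thmModel_val_box_zero (φ : Fm) :
    thmModel.val (.box φ) 0 = Prod.map shrink shrink (thmModel.val φ 1) := by
  have hinf : thmModel.val (.box φ) 0 = thmModel.val φ 1 ⊓ thmModel.val φ 2 := by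
    refine Prod.ext ?_ ?_ <;>
      simp [Mdl.val, thmR, iInf_fin_three, gimp_zero_left, gimp_one_left, le_one']
  rw [hinf, thmModel_val_two]
  exact inf_of_le_right ⟨shrink_le _, shrink_le _⟩

theorem thmModel_val_dia_zero (φ : Fm) : thmModel.val (.dia φ) 0 = thmModel.val φ 1 := by
  have hsup : thmModel.val (.dia φ) 0 = thmModel.val φ 1 ⊔ thmModel.val φ 2 := by
    refine Prod.ext ?_ ?_ <;> simp [Mdl.val, thmR, le_one']
  rw [hsup, thmModel_val_two]
  exact sup_of_le_left ⟨shrink_le _, shrink_le _⟩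

theorem thmModel_val_zero_mem_of_diaFree {χ : Fm} (h : χ.diaFree) :
    thmModel.val χ 0 ∈ (shrink '' thmDegrees) ×ˢ (shrink '' thmDegrees) := by
  have h0 : 0 ∈ shrink '' thmDegrees := ⟨0, zero_mem_thmDegrees, shrink_zero⟩
  have h1 : 1 ∈ shrink '' thmDegrees := ⟨1, one_mem_thmDegrees, shrink_one⟩
  induction χ with
  | var n => exact ⟨h1, h0⟩
  | neg φ ih => exact Mdl.val_neg_mem _ (ih h)
  | and φ ψ ihφ ihψ => exact Mdl.val_and_mem _ (ihφ h.1) (ihψ h.2)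
  | imp φ ψ _ ihψ => exact Mdl.val_imp_mem _ h0 h1 (ihψ h.2)
  | box φ =>
    rw [thmModel_val_box_zero]
    exact ⟨Set.mem_image_of_mem _ (thmModel_val_one_mem φ).1,
      Set.mem_image_of_mem _ (thmModel_val_one_mem φ).2⟩
  | dia φ => exact h.elim

theorem thmModel_val_zero_mem_of_boxFree {ψ : Fm} (h : ψ.boxFree) :
    thmModel.val ψ 0 ∈ thmDegrees ×ˢ thmDegrees := by
  induction ψ with
  | var n => exact ⟨one_mem_thmDegrees, zero_mem_thmDegrees⟩
  | neg φ ih => exact Mdl.val_neg_mem _ (ih h)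
  | and φ ψ ihφ ihψ => exact Mdl.val_and_mem _ (ihφ h.1) (ihψ h.2)
  | imp φ ψ _ ihψ => exact Mdl.val_imp_mem _ zero_mem_thmDegrees one_mem_thmDegrees (ihψ h.2)
  | box φ => exact h.elim
  | dia φ => rw [thmModel_val_dia_zero]; exact thmModel_val_one_mem φ

theorem box_dia_not_interdefinable :
    (∀ χ : Fm, χ.diaFree → thmModel.val χ 0 ≠ thmModel.val (.dia (.var 0)) 0) ∧
    (∀ ψ : Fm, ψ.boxFree → thmModel.val ψ 0 ≠ thmModel.val (.box (.var 0)) 0) := by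
  refine ⟨fun χ hχ h => ?_, fun ψ hψ h => ?_⟩
  · have hmem := (thmModel_val_zero_mem_of_diaFree hχ).1
    rw [h, thmModel_val_dia_zero, thmModel_val_var_one] at hmem
    exact twoThirds_notMem_image_shrink hmem
  · have hmem := (thmModel_val_zero_mem_of_boxFree hψ).1
    rw [h, thmModel_val_box_zero, thmModel_val_var_one] at hmem
    exact shrink_twoThirds_notMem hmem
end

section
/- On every finite bi-relational crisp frame, the formula ∼■(p ∨ ∼p) is not satisfiable with v₁-value 1: for every finite model and state w, v₁(∼■(p ∨ ∼p), w) = 0 is forced, i.e., v₁(■(p∨∼p), w) > 0. Moreover, there is an infinite crisp model and a state w₀ with v₁(∼■(p ∨ ∼p), w₀) = 1. -/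
open unitInterval

/-- A formula whose positive support is constantly 0 (the constant 0). -/
def fmBot : Fm := .neg (.imp (.var 0) (.var 0))

/-- Gödel negation: ∼φ := φ → 0. -/
def Fm.snot (φ : Fm) : Fm := .imp φ fmBot

/-- Disjunction: φ ∨ ψ := ¬(¬φ ∧ ¬ψ). -/
def Fm.or (φ ψ : Fm) : Fm := .neg (.and (.neg φ) (.neg ψ))


lemma fmBot_val1 (M : Mdl) (w : M.W) : M.val1 fmBot w = 0 := by
  simp [Mdl.val1, fmBot, Mdl.val, gcoimp]

lemma snot_val1 (M : Mdl) (φ : Fm) (w : M.W) :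
    M.val1 (Fm.snot φ) w = if M.val1 φ w ≤ 0 then 1 else 0 := by
  simp [Mdl.val1, Fm.snot, Mdl.val, gimp, fmBot, gcoimp]

lemma or_val1 (M : Mdl) (φ ψ : Fm) (w : M.W) :
    M.val1 (Fm.or φ ψ) w = M.val1 φ w ⊔ M.val1 ψ w := by
  simp [Mdl.val1, Fm.or, Mdl.val]

lemma porp_pos (M : Mdl) (w : M.W) :
    0 < M.val1 (Fm.or (.var 0) (Fm.snot (.var 0))) w := by
  rw [or_val1, snot_val1]
  rcases le_or_gt (M.val1 (.var 0) w) 0 with h | h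
  · simp [h]
  · exact lt_sup_of_lt_left h

lemma box_val1 (M : Mdl) (φ : Fm) (w : M.W) :
    M.val1 (.box φ) w = ⨅ w', gimp (M.Rp w w') (M.val1 φ w') := by
  simp [Mdl.val1, Mdl.val]

theorem no_finite_model_property :
    (∀ M : Mdl, Finite M.W →
      (∀ w w', M.Rp w w' = 0 ∨ M.Rp w w' = 1) →
      (∀ w w', M.Rm w w' = 0 ∨ M.Rm w w' = 1) →
      ∀ w : M.W,
        M.val1 (Fm.snot (.box (Fm.or (.var 0) (Fm.snot (.var 0))))) w = 0 ∧
        0 < M.val1 (.box (Fm.or (.var 0) (Fm.snot (.var 0)))) w) ∧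
    (∃ M : Mdl, Infinite M.W ∧
      (∀ w w', M.Rp w w' = 0 ∨ M.Rp w w' = 1) ∧
      (∀ w w', M.Rm w w' = 0 ∨ M.Rm w w' = 1) ∧
      ∃ w₀ : M.W,
        M.val1 (Fm.snot (.box (Fm.or (.var 0) (Fm.snot (.var 0))))) w₀ = 1) := by
  constructor
  · intro M _ hRp _ w
    have hpos : 0 < M.val1 (.box (Fm.or (.var 0) (Fm.snot (.var 0)))) w := by
      rw [box_val1]
      have hterm : ∀ w', 0 < gimp (M.Rp w w') (M.val1 (Fm.or (.var 0) (Fm.snot (.var 0))) w') := by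
        intro w'
        rcases hRp w w' with h | h <;> simp only [gimp, h]
        · simp
        · split
          · exact zero_lt_one
          · exact porp_pos M w'
      cases isEmpty_or_nonempty M.W
      · rw [iInf_of_empty]; exact zero_lt_one.trans_le le_top
      · obtain ⟨x, hx⟩ := Finite.exists_min
          (fun w' => gimp (M.Rp w w') (M.val1 (Fm.or (.var 0) (Fm.snot (.var 0))) w'))
        calc 0 < _ := hterm x
          _ ≤ _ := le_iInf hx
    refine ⟨?_, hpos⟩
    rw [snot_val1, if_neg (not_le.mpr hpos)]
  · refine ⟨⟨ℕ, fun _ _ => 1, fun _ _ => 1,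
      fun _ n => ⟨1/(n+1), by positivity, by
        rw [div_le_one (by positivity)]; linarith [Nat.cast_nonneg (α := ℝ) n]⟩,
      fun _ _ => 0⟩, inferInstance, fun _ _ => Or.inr rfl, fun _ _ => Or.inr rfl, 0, ?_⟩
    set M : Mdl := ⟨ℕ, fun _ _ => 1, fun _ _ => 1,
      fun _ n => ⟨1/(n+1), by positivity, by
        rw [div_le_one (by positivity)]; linarith [Nat.cast_nonneg (α := ℝ) n]⟩,
      fun _ _ => 0⟩ with hM
    have hvar : ∀ n : ℕ, M.val1 (.var 0) n = ⟨1/(n+1), by positivity, by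
        rw [div_le_one (by positivity)]; linarith [Nat.cast_nonneg (α := ℝ) n]⟩ := fun n => rfl
    have hor : ∀ n : ℕ, M.val1 (Fm.or (.var 0) (Fm.snot (.var 0))) n
        ≤ M.val1 (.var 0) n := by
      intro n
      rw [or_val1, snot_val1]
      have hpos : ¬ (M.val1 (.var 0) n ≤ 0) := by
        rw [hvar, ← Subtype.coe_le_coe, not_le]
        show (0:ℝ) < 1/(n+1)
        positivity
      rw [if_neg hpos]
      simp
    have hbox : M.val1 (.box (Fm.or (.var 0) (Fm.snot (.var 0)))) 0 = 0 := by
      rw [box_val1]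
      refine le_antisymm ?_ unitInterval.nonneg'
      by_contra hc
      rw [not_le] at hc
      obtain ⟨n, hn⟩ := exists_nat_gt (1 / ((⨅ w', gimp (M.Rp 0 w')
        (M.val1 (Fm.or (.var 0) (Fm.snot (.var 0))) w') : I) : ℝ))
      have h1 : (⨅ w', gimp (M.Rp 0 w') (M.val1 (Fm.or (.var 0) (Fm.snot (.var 0))) w') : I)
          ≤ M.val1 (.var 0) n := by
        refine le_trans (iInf_le _ n) ?_
        have : M.Rp 0 n = 1 := rfl
        rw [this]
        refine le_trans ?_ (hor n)
        unfold gimp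
        split
        · assumption
        · exact le_rfl
      rw [hvar n] at h1
      rw [← Subtype.coe_le_coe] at h1
      have hc' : (0:ℝ) < ((⨅ w', gimp (M.Rp 0 w')
          (M.val1 (Fm.or (.var 0) (Fm.snot (.var 0))) w') : I) : ℝ) := hc
      have hmul := (div_lt_iff₀ hc').mp hn
      have h2 : (1:ℝ)/(n+1) < ((⨅ w', gimp (M.Rp 0 w')
          (M.val1 (Fm.or (.var 0) (Fm.snot (.var 0))) w') : I) : ℝ) := by
        rw [div_lt_iff₀ (by positivity)]
        nlinarith [hmul, hc']
      exact absurd h1 (not_le.mpr h2)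
    rw [snot_val1, hbox, if_pos le_rfl]
end

section
/- Let F = ⟨W, S⟩ be a frame with a single fuzzy relation, let F⁻ = ⟨W, R⁺, S⟩ be any R⁻-counterpart, and let v be a KbiG valuation on F. Define v₁ on F⁻ by v₁(p,w) = v(p,w) and let v₂ be arbitrary. Then for every formula φ over {∧,∨,→,⊰,□,◇}, letting φ^{-•} be φ with □ replaced by ¬■¬ and ◇ by ¬◆¬, we have v₁(φ^{-•}, w) = v(φ, w) for all w ∈ W. -/
open unitInterval

/-- The language of KbiG: ∧, ∨, →, ⊰, □, ◇. -/
inductive BFm : Type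
  | var : ℕ → BFm
  | and : BFm → BFm → BFm
  | or : BFm → BFm → BFm
  | imp : BFm → BFm → BFm
  | coimp : BFm → BFm → BFm
  | box : BFm → BFm
  | dia : BFm → BFm

/-- KbiG semantics on a mono-relational fuzzy frame. -/
noncomputable def bval {W : Type} (S : W → W → I) (v : ℕ → W → I) : BFm → W → I
  | .var n, w => v n w
  | .and φ ψ, w => bval S v φ w ⊓ bval S v ψ w
  | .or φ ψ, w => bval S v φ w ⊔ bval S v ψ w
  | .imp φ ψ, w => gimp (bval S v φ w) (bval S v ψ w)
  | .coimp φ ψ, w => gcoimp (bval S v φ w) (bval S v ψ w)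
  | .box φ, w => ⨅ w', gimp (S w w') (bval S v φ w')
  | .dia φ, w => ⨆ w', (S w w') ⊓ bval S v φ w'

/-- The translation φ^{-•}: □ becomes ¬■¬ and ◇ becomes ¬◆¬ (∨ and ⊰ are
unfolded via their De Morgan definitions in the G²± language). -/
def BFm.negTrans : BFm → Fm
  | .var n => .var n
  | .and φ ψ => .and φ.negTrans ψ.negTrans
  | .or φ ψ => .neg (.and (.neg φ.negTrans) (.neg ψ.negTrans))
  | .imp φ ψ => .imp φ.negTrans ψ.negTrans
  | .coimp φ ψ => .neg (.imp (.neg ψ.negTrans) (.neg φ.negTrans))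
  | .box φ => .neg (.box (.neg φ.negTrans))
  | .dia φ => .neg (.dia (.neg φ.negTrans))

theorem negTrans_on_Rminus_counterpart :
    ∀ (W : Type) (S Rp : W → W → I) (v v2 : ℕ → W → I) (φ : BFm) (w : W),
      (Mdl.mk W Rp S v v2).val1 φ.negTrans w = bval S v φ w := by
  intro W S Rp v v2 φ
  induction φ with
  | var n => intro w; rfl
  | and φ ψ ihφ ihψ =>
      intro w
      simp only [Mdl.val1, BFm.negTrans, Mdl.val, bval] at *
      rw [ihφ, ihψ]
  | or φ ψ ihφ ihψ =>
      intro w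
      simp only [Mdl.val1, BFm.negTrans, Mdl.val, bval] at *
      rw [ihφ, ihψ]
  | imp φ ψ ihφ ihψ =>
      intro w
      simp only [Mdl.val1, BFm.negTrans, Mdl.val, bval] at *
      rw [ihφ, ihψ]
  | coimp φ ψ ihφ ihψ =>
      intro w
      simp only [Mdl.val1, BFm.negTrans, Mdl.val, bval] at *
      rw [ihφ, ihψ]
  | box φ ih =>
      intro w
      simp only [Mdl.val1, BFm.negTrans, Mdl.val, bval] at *
      exact iInf_congr fun w' => by rw [ih]
  | dia φ ih =>
      intro w
      simp only [Mdl.val1, BFm.negTrans, Mdl.val, bval] at *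
      exact iSup_congr fun w' => by rw [ih]
end
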